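/- The family ℰ = {V(p)} ∪ {V(p) \ V(q)} of cylinder and relative cylinder sets separates points of ∂X: if x ≠ y in ∂X, there exist disjoint A, B ∈ ℰ with x ∈ A and y ∈ B. -/

import Mathlib

namespace ZnTree

abbrev Letter (n : ℕ) := Bool × (Fin n → ℤ)
abbrev Word (n : ℕ) := List (Letter n)

/-- `a` is positive in the lexicographic order on `ℤⁿ`. -/
def PosL (n : ℕ) (a : Fin n → ℤ) : Prop := toLex (0 : Fin n → ℤ) < toLex a

/-- The word alternates between the two copies of `Λ⁺`. -/
def Alt (n : ℕ) (w : Word n) : Prop := List.Chain' (fun x y => x.1 ≠ y.1) w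

/-- `w` is an element of `X = Λ⁺ * Λ⁺`. -/
def IsX (n : ℕ) (w : Word n) : Prop := Alt n w ∧ ∀ x ∈ w, PosL n x.2

/-- Concatenation in `X`, merging adjacent letters from the same copy. -/
def wmul (n : ℕ) (p q : Word n) : Word n :=
  match p.getLast?, q with
  | some a, b :: q' =>
      if a.1 = b.1 then p.dropLast ++ (a.1, a.2 + b.2) :: q' else p ++ q
  | _, _ => p ++ q

/-- The length function `l : X → ℤⁿ`. -/
def wlen (n : ℕ) (p : Word n) : Fin n → ℤ := (p.map Prod.snd).sum

/-- `b ∈ ∂Λ⁺`. -/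
def IsBLet (n : ℕ) (b : Fin n → ℕ∞) : Prop :=
  (∀ i j : Fin n, i ≤ j → b i = ⊤ → b j = ⊤) ∧ ∀ i : Fin n, (i : ℕ) = n - 1 → b i = ⊤

/-- Points of the boundary `∂X`: finite alternating words ending with a letter of `∂Λ⁺`,
or infinite alternating words. -/
inductive Bdry (n : ℕ) where
  | fin (w : Word n) (b : Bool × (Fin n → ℕ∞)) : Bdry n
  | inf (f : ℕ → Letter n) : Bdry n

/-- Well-formedness of boundary points. -/
def IsBdry (n : ℕ) : Bdry n → Prop
  | .fin w b => IsX n w ∧ IsBLet n b.2 ∧ ∀ a ∈ w.getLast?, a.1 ≠ b.1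
  | .inf f => (∀ i, (f i).1 ≠ (f (i + 1)).1) ∧ ∀ i, PosL n (f i).2

/-- Componentwise sum `a + b` for `a ∈ Λ⁺`, `b ∈ ∂Λ⁺`. -/
def addB (n : ℕ) (a : Fin n → ℤ) (b : Fin n → ℕ∞) : Fin n → ℕ∞ :=
  fun i => (b i).map (fun (k : ℕ) => ((k : ℤ) + a i).toNat)

/-- Prepend a finite word to an infinite word. -/
def pre (n : ℕ) (w : Word n) (f : ℕ → Letter n) : ℕ → Letter n :=
  fun i => if i < w.length then w.getD i (false, 0) else f (i - w.length)

/-- Concatenation `p z` for `p ∈ X` and `z ∈ ∂X`. -/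
def bmul (n : ℕ) (p : Word n) (z : Bdry n) : Bdry n :=
  match z with
  | .inf f =>
    match p.getLast? with
    | some a =>
      if a.1 = (f 0).1 then
        .inf (pre n (p.dropLast ++ [(a.1, a.2 + (f 0).2)]) (fun i => f (i + 1)))
      else .inf (pre n p f)
    | none => .inf f
  | .fin w b =>
    match w, p.getLast? with
    | _ :: _, _ => .fin (wmul n p w) b
    | [], some a => if a.1 = b.1 then .fin p.dropLast (b.1, addB n a.2 b.2) else .fin p b
    | [], none => .fin [] b

/-- The boundary `∂X` as a type. -/
def bX (n : ℕ) := {z : Bdry n // IsBdry n z}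

/-- The cylinder set `V(p) = {px : x ∈ ∂X}`. -/
def Vs (n : ℕ) (p : Word n) : Set (bX n) := {z | ∃ x : bX n, z.1 = bmul n p x.1}

/-- The family `ℰ = {V(p)} ∪ {V(p) \ V(q)}`. -/
def E (n : ℕ) : Set (Set (bX n)) :=
  {A | ∃ p, IsX n p ∧ A = Vs n p} ∪
  {A | ∃ p q, IsX n p ∧ IsX n q ∧ A = Vs n p \ Vs n q}

/-- `∂X` as a subset of the raw type `Bdry n`. -/
def bset (n : ℕ) : Set (Bdry n) := {z | IsBdry n z}

/-- The basic groupoid set `[p,q]_A = {(px, l(p) - l(q), qx) : x ∈ A}`. -/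
def Uset (n : ℕ) (p q : Word n) (A : Set (Bdry n)) :
    Set (Bdry n × (Fin n → ℤ) × Bdry n) :=
  {g | ∃ x ∈ A, g = (bmul n p x, wlen n p - wlen n q, bmul n q x)}

/-- Setwise groupoid multiplication. -/
def gmulS (n : ℕ) (S T : Set (Bdry n × (Fin n → ℤ) × Bdry n)) :
    Set (Bdry n × (Fin n → ℤ) × Bdry n) :=
  {g | ∃ s ∈ S, ∃ t ∈ T, s.2.2 = t.1 ∧ g = (s.1, s.2.1 + t.2.1, t.2.2)}

/-- Setwise groupoid inversion. -/
def ginvS (n : ℕ) (S : Set (Bdry n × (Fin n → ℤ) × Bdry n)) :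
    Set (Bdry n × (Fin n → ℤ) × Bdry n) :=
  {g | ∃ s ∈ S, g = (s.2.2, -s.2.1, s.1)}

/-- Shift equivalence with lag `k`: `x ∼ₖ y` iff `x = pz`, `y = qz`, `k = l(p) - l(q)`. -/
def srel (n : ℕ) (k : Fin n → ℤ) (x y : Bdry n) : Prop :=
  ∃ p q z, IsX n p ∧ IsX n q ∧ IsBdry n z ∧
    k = wlen n p - wlen n q ∧ x = bmul n p z ∧ y = bmul n q z

/-- The prefix (extension) order on `X`: `p ⪯ q`. -/
def xle (n : ℕ) (p q : Word n) : Prop := ∃ r, IsX n r ∧ q = wmul n p r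

/-!
Two distinct boundary points are told apart by one cylinder: one lies in `V(p)`, the other does
not, so `V(p)` and `V(∅) \ V(p)` are the required disjoint members of `ℰ`. A point of
`V(w (c, a))` begins with `w` and has, at position `|w|`, a letter of copy `c` that is at least
`a`. Hence `p` can be taken as follows. Against an infinite point: a prefix of it longer than the
other point, or, when both are infinite and differ at position `m`, the prefix up to `m` of one
of them whose `m`-th letter is not dominated in that sense by the other's. For finite points
`w b` and `w' b'`: `w` followed by the last unit vector, which fits under `b` because the last
coordinate of `b` is `∞` (when `w` is not a prefix of `w'`, or `b`, `b'` lie in different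
copies), or `w` followed by `(b' i + 1) eᵢ` when `b' i < b i`.
-/

def Cyl (n : ℕ) (p : Word n) : Set (Bdry n) := bmul n p '' bset n

def CylSeparated (n : ℕ) (X Y : Bdry n) : Prop := ∃ p, IsX n p ∧ X ∈ Cyl n p ∧ Y ∉ Cyl n p

section Separation

variable {n : ℕ}

lemma isX_nil : IsX n [] := ⟨List.isChain_nil, by simp⟩

lemma bmul_nil (z : Bdry n) : bmul n [] z = z := by
  cases z with
  | fin w b => cases w <;> rfl
  | inf f => rfl

lemma mem_Vs_iff {p : Word n} {x : bX n} : x ∈ Vs n p ↔ x.1 ∈ Cyl n p :=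
  ⟨fun ⟨z, hz⟩ => ⟨z.1, z.2, hz.symm⟩, fun ⟨z, hz, hzx⟩ => ⟨⟨z, hz⟩, hzx.symm⟩⟩

lemma Vs_nil : Vs n [] = Set.univ :=
  Set.eq_univ_of_forall fun x => mem_Vs_iff.2 ⟨x.1, x.2, bmul_nil x.1⟩

lemma exists_disjoint_mem_E_of_cylSeparated {x y : bX n} (h : CylSeparated n x.1 y.1) :
    ∃ A ∈ E n, ∃ B ∈ E n, x ∈ A ∧ y ∈ B ∧ A ∩ B = ∅ := by
  obtain ⟨p, hp, hx, hy⟩ := h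
  refine ⟨Vs n p, Or.inl ⟨p, hp, rfl⟩, Vs n [] \ Vs n p, Or.inr ⟨[], p, isX_nil, hp, rfl⟩,
    mem_Vs_iff.2 hx, ⟨Vs_nil ▸ Set.mem_univ y, mt mem_Vs_iff.1 hy⟩, Set.inter_sdiff_self _ _⟩

lemma posL_natCast {a : Fin n → ℕ} (ha : a ≠ 0) : PosL n fun i => (a i : ℤ) :=
  Pi.toLex_strictMono <| Pi.lt_def.2 ⟨fun i => Int.natCast_nonneg (a i),
    let ⟨i, hi⟩ := Function.ne_iff.1 ha; ⟨i, by simpa [Nat.pos_iff_ne_zero] using hi⟩⟩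

lemma isX_concat {w : Word n} (hw : IsX n w) {x : Letter n}
    (hl : ∀ u ∈ w.getLast?, u.1 ≠ x.1) (hx : PosL n x.2) : IsX n (w ++ [x]) := by
  refine ⟨List.isChain_append.2 ⟨hw.1, List.isChain_singleton _, ?_⟩, ?_⟩
  · intro u hu v hv
    cases hv
    exact hl u hu
  · intro u hu
    rcases List.mem_append.1 hu with hu | hu
    · exact hw.2 u hu
    · cases List.mem_singleton.1 hu
      exact hx

lemma length_le_length_wmul (p q : Word n) : p.length ≤ (wmul n p q).length := by
  unfold wmul
  split
  · split
    · have : p ≠ [] := by rintro rfl; simp_all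
      simp [List.length_dropLast]
      omega
    · simp
  · simp

lemma dropLast_prefix_wmul (p q : Word n) : p.dropLast <+: wmul n p q := by
  unfold wmul
  split
  · split
    · exact List.prefix_append _ _
    · exact (List.dropLast_prefix p).trans (List.prefix_append _ _)
  · exact (List.dropLast_prefix p).trans (List.prefix_append _ _)

lemma dropLast_prefix_of_bmul_eq_fin {p w : Word n} {z : Bdry n} {b : Bool × (Fin n → ℕ∞)}
    (h : bmul n p z = .fin w b) : p.dropLast <+: w := by
  rcases z with ⟨_ | ⟨u, v⟩, b'⟩ | f
  · rcases hp : p.getLast? with _ | a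
    · simp_all [bmul, List.getLast?_eq_none_iff.1 hp]
    · simp only [bmul, hp] at h
      split_ifs at h <;> cases h
      · exact List.prefix_refl _
      · exact List.dropLast_prefix p
  · simp only [bmul, Bdry.fin.injEq] at h
    exact h.1 ▸ dropLast_prefix_wmul p _
  · simp only [bmul] at h
    split at h
    · split_ifs at h
    · cases h


lemma exists_eq_addB_of_bmul_concat_eq_fin {w : Word n} {c : Bool} {a : Fin n → ℤ} {z : Bdry n}
    {b : Bool × (Fin n → ℕ∞)} (h : bmul n (w ++ [(c, a)]) z = .fin w b) :
    ∃ γ, b = (c, addB n a γ) := by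
  rcases z with ⟨_ | ⟨u, v⟩, b'⟩ | f
  · simp only [bmul, List.getLast?_concat] at h
    split_ifs at h with hc
    · simp only [Bdry.fin.injEq, List.dropLast_concat] at h
      exact ⟨b'.2, by rw [← h.2, hc]⟩
    · simp only [Bdry.fin.injEq] at h
      simpa using congrArg List.length h.1
  · simp only [bmul, Bdry.fin.injEq] at h
    have hlen := length_le_length_wmul (w ++ [(c, a)]) (u :: v)
    rw [h.1] at hlen
    simp at hlen
  · simp only [bmul, List.getLast?_concat] at h
    split_ifs at h

lemma bmul_concat_eq_inf {q : Word n} {x : Letter n} {z : Bdry n} {f : ℕ → Letter n}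
    (hz : IsBdry n z) (h : bmul n (q ++ [x]) z = .inf f) :
    (f q.length).1 = x.1 ∧ toLex x.2 ≤ toLex (f q.length).2 := by
  rcases z with ⟨_ | ⟨u, v⟩, b'⟩ | g
  · simp only [bmul, List.getLast?_concat] at h
    split_ifs at h
  · cases h
  · simp only [bmul, List.getLast?_concat] at h
    have h0 : 0 ≤ toLex (g 0).2 := (hz.2 0).le
    split_ifs at h <;> simp only [Bdry.inf.injEq] at h <;> subst h <;> simp [pre, h0]

lemma addB_natCast (a : Fin n → ℕ) (γ : Fin n → ℕ∞) :
    addB n (fun i => (a i : ℤ)) γ = γ + fun i => (a i : ℕ∞) := by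
  funext i
  cases h : γ i with
  | top =>
    simp only [addB, Pi.add_apply, h, ENat.map_top, top_add]
    rfl
  | coe k =>
    simp only [addB, Pi.add_apply, h, ENat.map_natCast]
    norm_cast

lemma isBLet_sub {β : Fin n → ℕ∞} (hβ : IsBLet n β) (a : Fin n → ℕ) :
    IsBLet n (β - fun i => (a i : ℕ∞)) := by
  have htop : ∀ i, (β - fun i => (a i : ℕ∞)) i = ⊤ ↔ β i = ⊤ := fun i => by
    simp [ENat.sub_eq_top_iff]
  exact ⟨fun i j hij h => (htop j).2 (hβ.1 i j hij ((htop i).1 h)),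
    fun i hi => (htop i).2 (hβ.2 i hi)⟩

lemma fin_mem_cyl_concat {w : Word n} {c : Bool} {β : Fin n → ℕ∞}
    (hw : IsBdry n (.fin w (c, β))) {a : Fin n → ℕ} (ha : ∀ i, (a i : ℕ∞) ≤ β i) :
    Bdry.fin w (c, β) ∈ Cyl n (w ++ [(c, fun i => (a i : ℤ))]) := by
  refine ⟨.fin [] (c, β - fun i => (a i : ℕ∞)), ⟨isX_nil, isBLet_sub hw.2.1 a, by simp⟩, ?_⟩
  simp only [bmul, List.getLast?_concat, if_pos, List.dropLast_concat, addB_natCast,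
    tsub_add_cancel_of_le (show _ ≤ β from ha)]

lemma exists_fin_mem_cyl_concat (hn : 0 < n) {w : Word n} {b : Bool × (Fin n → ℕ∞)}
    (hb : IsBdry n (.fin w b)) :
    ∃ a : Fin n → ℤ, IsX n (w ++ [(b.1, a)]) ∧ Bdry.fin w b ∈ Cyl n (w ++ [(b.1, a)]) := by
  let last : Fin n := ⟨n - 1, Nat.sub_lt hn one_pos⟩
  have hle : ∀ i, ((Pi.single last 1 : Fin n → ℕ) i : ℕ∞) ≤ b.2 i := fun i => by
    rcases eq_or_ne i last with rfl | hi
    · simp [hb.2.1.2 last rfl]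
    · simp [hi]
  exact ⟨_, isX_concat hb.1 hb.2.2 (posL_natCast (by simp)), fin_mem_cyl_concat hb hle⟩

lemma cylSeparated_fin_of_lt {w : Word n} {c : Bool} {β β' : Fin n → ℕ∞}
    (hw : IsBdry n (.fin w (c, β))) {i : Fin n} (h : β' i < β i) :
    CylSeparated n (.fin w (c, β)) (.fin w (c, β')) := by
  obtain ⟨m, hm⟩ := ENat.ne_top_iff_exists.1 h.ne_top
  let a : Fin n → ℕ := Pi.single i (m + 1)
  have hle : ∀ j, (a j : ℕ∞) ≤ β j := fun j => by
    rcases eq_or_ne j i with rfl | hj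
    · have := (ENat.add_one_le_iff h.ne_top).2 h
      rw [← hm] at this
      simp only [a, Pi.single_eq_same]
      exact_mod_cast this
    · simp [a, hj]
  refine ⟨_, isX_concat hw.1 hw.2.2 (posL_natCast (by simp [a])), fin_mem_cyl_concat hw hle, ?_⟩
  rintro ⟨z, -, hz⟩
  obtain ⟨γ, hγ⟩ := exists_eq_addB_of_bmul_concat_eq_fin hz
  have hβ' : β' i = γ i + (m + 1) := by
    rw [(Prod.mk.inj hγ).2, addB_natCast]
    simp [a]
  have hle : (m : ℕ∞) + 1 ≤ m := calc
    (m : ℕ∞) + 1 ≤ γ i + (m + 1) := le_add_self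
    _ = m := hβ'.symm.trans hm.symm
  exact (lt_irrefl _) ((ENat.add_one_le_iff (ENat.natCast_ne_top m)).1 hle)

lemma cylSeparated_fin_of_not_prefix (hn : 0 < n) {w w' : Word n} {b b' : Bool × (Fin n → ℕ∞)}
    (hb : IsBdry n (.fin w b)) (h : ¬ w <+: w') :
    CylSeparated n (.fin w b) (.fin w' b') := by
  obtain ⟨a, hp, hmem⟩ := exists_fin_mem_cyl_concat hn hb
  refine ⟨_, hp, hmem, ?_⟩
  rintro ⟨z, -, hz⟩
  exact h (by simpa using dropLast_prefix_of_bmul_eq_fin hz)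

lemma cylSeparated_fin_of_fst_ne (hn : 0 < n) {w : Word n} {b b' : Bool × (Fin n → ℕ∞)}
    (hb : IsBdry n (.fin w b)) (h : b.1 ≠ b'.1) :
    CylSeparated n (.fin w b) (.fin w b') := by
  obtain ⟨a, hp, hmem⟩ := exists_fin_mem_cyl_concat hn hb
  refine ⟨_, hp, hmem, ?_⟩
  rintro ⟨z, -, hz⟩
  obtain ⟨γ, rfl⟩ := exists_eq_addB_of_bmul_concat_eq_fin hz
  exact h rfl

lemma cylSeparated_or_cylSeparated_fin (hn : 0 < n) {w w' : Word n}
    {b b' : Bool × (Fin n → ℕ∞)} (hb : IsBdry n (.fin w b)) (hb' : IsBdry n (.fin w' b'))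
    (hne : Bdry.fin w b ≠ .fin w' b') :
    CylSeparated n (.fin w b) (.fin w' b') ∨ CylSeparated n (.fin w' b') (.fin w b) := by
  by_cases hww' : w <+: w'
  swap
  · exact .inl (cylSeparated_fin_of_not_prefix hn hb hww')
  by_cases hw'w : w' <+: w
  swap
  · exact .inr (cylSeparated_fin_of_not_prefix hn hb' hw'w)
  obtain rfl := hww'.sublist.antisymm hw'w.sublist
  obtain ⟨c, β⟩ := b
  obtain ⟨c', β'⟩ := b'
  by_cases hc : c = c'
  swap
  · exact .inl (cylSeparated_fin_of_fst_ne hn hb hc)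
  subst hc
  obtain ⟨i, hi⟩ := Function.ne_iff.1 fun hβ : β = β' => hne (hβ ▸ rfl)
  rcases hi.lt_or_gt with h | h
  · exact .inr (cylSeparated_fin_of_lt hb' h)
  · exact .inl (cylSeparated_fin_of_lt hb h)

lemma ofFn_succ_eq_concat (f : ℕ → Letter n) (m : ℕ) :
    (List.ofFn fun i : Fin (m + 1) => f i) = (List.ofFn fun i : Fin m => f i) ++ [f m] := by
  rw [List.ofFn_succ', List.concat_eq_append]
  rfl

lemma pre_ofFn (f : ℕ → Letter n) (m : ℕ) :
    pre n (List.ofFn fun i : Fin m => f i) (fun i => f (i + m)) = f := by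
  funext i
  by_cases h : i < m
  · simp [pre, h]
  · simp [pre, h, Nat.sub_add_cancel (Nat.le_of_not_lt h)]

lemma isX_ofFn {f : ℕ → Letter n} (hf : IsBdry n (.inf f)) (m : ℕ) :
    IsX n (List.ofFn fun i : Fin m => f i) := by
  refine ⟨List.isChain_iff_getElem.2 fun i _ => ?_, ?_⟩
  · rw [List.getElem_ofFn, List.getElem_ofFn]
    exact hf.1 i
  · simp only [List.mem_ofFn]
    rintro _ ⟨i, rfl⟩
    exact hf.2 i

lemma inf_mem_cyl_ofFn {f : ℕ → Letter n} (hf : IsBdry n (.inf f)) (m : ℕ) :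
    Bdry.inf f ∈ Cyl n (List.ofFn fun i : Fin (m + 1) => f i) := by
  refine ⟨.inf fun i => f (i + (m + 1)), ⟨fun i => ?_, fun i => hf.2 _⟩, ?_⟩
  · simpa [Nat.add_right_comm] using hf.1 (i + (m + 1))
  · have hne : (f m).1 ≠ (f (0 + (m + 1))).1 := by simpa using hf.1 m
    simp only [bmul, ofFn_succ_eq_concat, List.getLast?_concat, if_neg hne]
    rw [← ofFn_succ_eq_concat, pre_ofFn]

lemma cylSeparated_inf_fin {f : ℕ → Letter n} (hf : IsBdry n (.inf f)) (w : Word n)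
    (b : Bool × (Fin n → ℕ∞)) : CylSeparated n (.inf f) (.fin w b) := by
  refine ⟨_, isX_ofFn hf _, inf_mem_cyl_ofFn hf (w.length + 1), ?_⟩
  rintro ⟨z, -, hz⟩
  simpa using (dropLast_prefix_of_bmul_eq_fin hz).length_le

lemma cylSeparated_inf_inf {f g : ℕ → Letter n} (hf : IsBdry n (.inf f)) (m : ℕ)
    (h : ¬((g m).1 = (f m).1 ∧ toLex (f m).2 ≤ toLex (g m).2)) :
    CylSeparated n (.inf f) (.inf g) := by
  refine ⟨_, isX_ofFn hf _, inf_mem_cyl_ofFn hf m, ?_⟩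
  rintro ⟨z, hz, hzg⟩
  rw [ofFn_succ_eq_concat] at hzg
  exact h (by simpa using bmul_concat_eq_inf hz hzg)

lemma cylSeparated_or_cylSeparated (hn : 0 < n) {X Y : Bdry n} (hX : IsBdry n X)
    (hY : IsBdry n Y) (hXY : X ≠ Y) : CylSeparated n X Y ∨ CylSeparated n Y X := by
  rcases X with ⟨w, b⟩ | f <;> rcases Y with ⟨w', b'⟩ | g
  · exact cylSeparated_or_cylSeparated_fin hn hX hY hXY
  · exact .inr (cylSeparated_inf_fin hY w b)
  · exact .inl (cylSeparated_inf_fin hX w' b')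
  · obtain ⟨m, hm⟩ := Function.ne_iff.1 fun hfg : f = g => hXY (hfg ▸ rfl)
    by_cases h : (g m).1 = (f m).1 ∧ toLex (f m).2 ≤ toLex (g m).2
    · refine .inr (cylSeparated_inf_inf hY m fun h' => hm ?_)
      exact Prod.ext h'.1 (toLex_inj.1 (h.2.antisymm h'.2))
    · exact .inl (cylSeparated_inf_inf hX m h)

end Separation

/-- The family `ℰ = {V(p)} ∪ {V(p) \\ V(q)}` separates points of `∂X`:
if `x ≠ y` in `∂X` there are disjoint `A, B ∈ ℰ` with `x ∈ A`, `y ∈ B`. -/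
theorem E_separates_points (n : ℕ) (hn : 2 ≤ n) (x y : bX n) (hxy : x ≠ y) :
    ∃ A ∈ E n, ∃ B ∈ E n, x ∈ A ∧ y ∈ B ∧ A ∩ B = ∅ := by
  rcases cylSeparated_or_cylSeparated (by omega) x.2 y.2 (Subtype.coe_ne_coe.2 hxy) with h | h
  · exact exists_disjoint_mem_E_of_cylSeparated h
  · obtain ⟨B, hB, A, hA, hy, hx, hBA⟩ := exists_disjoint_mem_E_of_cylSeparated h
    exact ⟨A, hA, B, hB, hx, hy, Set.inter_comm A B ▸ hBA⟩

end ZnTree
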